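/- Let T(v₁) and T(v₂) be rooted trees of equal height h, and let d_φ(T(v₁),T(v₂)) = ‖φ(T(v₁),𝒰) − φ(T(v₂),𝒰)‖₁ be the L₁ distance between their Bag-of-Complete-Subtree vectors. Then the true tree edit distance d_TED satisfies d_φ(T(v₁),T(v₂))/(2h+2) ≤ d_TED(T(v₁),T(v₂)) ≤ d_φ(T(v₁),T(v₂)). -/

import Mathlib

inductive LTree : Type
  | node : ℕ → List LTree → LTree

namespace LTree

inductive Iso : LTree → LTree → Prop
  | node {a : ℕ} {cs ds ds' : List LTree} :
      ds.Perm ds' → List.Forall₂ Iso cs ds' → Iso (.node a cs) (.node a ds)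

def nodeCount : LTree → ℕ
  | node _ cs => 1 + (cs.attach.map (fun c => nodeCount c.1)).sum
decreasing_by have := List.sizeOf_lt_of_mem c.2; simp only [LTree.node.sizeOf_spec]; omega

def leafCount : LTree → ℕ
  | node _ [] => 1
  | node _ (c :: cs) => ((c :: cs).attach.map (fun x => leafCount x.1)).sum
decreasing_by have := List.sizeOf_lt_of_mem x.2; simp only [LTree.node.sizeOf_spec]; omega

def height : LTree → ℕ
  | node _ cs => (cs.attach.map (fun c => height c.1 + 1)).foldr max 0
decreasing_by have := List.sizeOf_lt_of_mem c.2; simp only [LTree.node.sizeOf_spec]; omega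

def edgeCount : LTree → ℕ
  | node _ cs => cs.length + (cs.attach.map (fun c => edgeCount c.1)).sum
decreasing_by have := List.sizeOf_lt_of_mem c.2; simp only [LTree.node.sizeOf_spec]; omega

def subtrees : LTree → Multiset LTree
  | node a cs => node a cs ::ₘ ((cs.attach.map (fun c => subtrees c.1)).sum : Multiset LTree)
decreasing_by have := List.sizeOf_lt_of_mem c.2; simp only [LTree.node.sizeOf_spec]; omega

def code : LTree → ℕ
  | node a cs => Nat.pair a (Encodable.encode ((cs.attach.map (fun c => code c.1)).mergeSort (· ≤ ·)))
decreasing_by have := List.sizeOf_lt_of_mem c.2; simp only [LTree.node.sizeOf_spec]; omega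

inductive Balanced : ℕ → LTree → Prop
  | leaf (a : ℕ) : Balanced 0 (.node a [])
  | node {a : ℕ} {cs : List LTree} {n : ℕ} :
      cs ≠ [] → (∀ c ∈ cs, Balanced n c) → Balanced (n + 1) (.node a cs)

def labelSet : LTree → Multiset ℕ
  | node a cs => a ::ₘ ((cs.attach.map (fun c => labelSet c.1)).sum : Multiset ℕ)
decreasing_by have := List.sizeOf_lt_of_mem c.2; simp only [LTree.node.sizeOf_spec]; omega

end LTree

namespace LTree

/-- One tree edit operation: relabel a node, delete a (non-root) node
(promoting its children), or insert a node. `congr` lets an edit happen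
anywhere in the tree. -/
inductive EditStep : LTree → LTree → Prop
  | relabel (a b : ℕ) (cs : List LTree) : EditStep (.node a cs) (.node b cs)
  | delete (a b : ℕ) (pre post ds : List LTree) :
      EditStep (.node a (pre ++ .node b ds :: post)) (.node a (pre ++ ds ++ post))
  | insert (a b : ℕ) (pre post ds : List LTree) :
      EditStep (.node a (pre ++ ds ++ post)) (.node a (pre ++ .node b ds :: post))
  | congr (a : ℕ) (pre post : List LTree) (t t' : LTree) :
      EditStep t t' → EditStep (.node a (pre ++ t :: post)) (.node a (pre ++ t' :: post))

/-- `Edits n t t'`: `t` can be transformed into (a tree isomorphic to) `t'`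
by `n` edit operations, reordering children freely (unordered trees). -/
inductive Edits : ℕ → LTree → LTree → Prop
  | iso {t t'} : Iso t t' → Edits 0 t t'
  | step {n t s s' t'} : Iso t s → EditStep s s' → Edits n s' t' → Edits (n + 1) t t'

/-- Tree edit distance between unordered labeled rooted trees. -/
noncomputable def dTED (t t' : LTree) : ℕ := sInf {n | Edits n t t'}

/-- Bag of complete subtrees: the multiset of (canonical codes of) all
complete subtrees of `T`. -/
def bocs (T : LTree) : Multiset ℕ := (subtrees T).map code

/-- `L₁`-approximated tree edit distance: the `L₁` distance between the
Bag-of-Complete-Subtree count vectors. -/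
def dphi (T T' : LTree) : ℕ :=
  ∑ c ∈ (bocs T + bocs T').toFinset,
    (((bocs T).count c - (bocs T').count c) + ((bocs T').count c - (bocs T).count c))

end LTree

/-!
Upper bound. If the roots are not isomorphic, relabel the root of `T1` and then edit its forest
of children into that of `T2`. Between two forests, a top-level tree whose code does not occur in
the other forest's bag is deleted (or inserted) at cost one, and the `L₁` distance drops by one.
Otherwise take a top-level tree of maximal height: an isomorphic copy of it occurs in the other
forest, and by maximality that copy is itself top-level, so the pair is kept at no cost. Equal
heights keep each root's code out of the other tree's bag, so `d_φ` charges two for the roots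
against the single relabeling.

Lower bound. An edit step only changes the complete subtrees rooted on the path from the root to
the edited node, and their heights are pairwise distinct. The trees met along an edit sequence may
be taller than `h`, so only subtrees of height at most `h` are counted: at most `h + 1` of them
disappear and `h + 1` appear per step, and for `T1` and `T2` they form the whole bag.
-/

namespace Multiset

variable {α β : Type*}

theorem rel_coe_left_iff {R : α → β → Prop} {l₁ : List α} {m : Multiset β} :
    Rel R l₁ m ↔ ∃ l₂ : List β, (l₂ : Multiset β) = m ∧ List.Forall₂ R l₁ l₂ := by
  constructor
  · induction l₁ generalizing m with
    | nil => intro h; exact ⟨[], (rel_zero_left.1 h).symm, .nil⟩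
    | cons a l ih =>
      intro h
      rw [← cons_coe] at h
      obtain ⟨b, m', hab, hrel, rfl⟩ := rel_cons_left.1 h
      obtain ⟨l₂, rfl, hl₂⟩ := ih hrel
      exact ⟨b :: l₂, rfl, .cons hab hl₂⟩
  · rintro ⟨l₂, rfl, h⟩
    induction h with
    | nil => exact .zero
    | cons hab _ ih => exact .cons hab ih

theorem coe_append_cons (l₁ l₂ : List α) (a : α) :
    ((l₁ ++ a :: l₂ : List α) : Multiset α) = a ::ₘ ↑(l₁ ++ l₂) :=
  coe_eq_coe.2 List.perm_middle

theorem Rel.map_filter_eq {R : α → α → Prop} {p : α → Prop} [DecidablePred p] {f : α → β}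
    {s t : Multiset α} (h : Rel R s t) (hp : ∀ x y, R x y → (p x ↔ p y))
    (hf : ∀ x y, R x y → f x = f y) : (s.filter p).map f = (t.filter p).map f := by
  induction h with
  | zero => rfl
  | @cons a b _ _ hab _ ih =>
    by_cases hpa : p a
    · rw [filter_cons_of_pos _ hpa, filter_cons_of_pos _ ((hp a b hab).1 hpa), map_cons, map_cons,
        hf a b hab, ih]
    · rw [filter_cons_of_neg _ hpa, filter_cons_of_neg _ (by rwa [← hp a b hab]), ih]

theorem sort_inj {γ : Type*} [LinearOrder γ] {s t : Multiset γ} : s.sort = t.sort ↔ s = t :=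
  ⟨fun h => by rw [← sort_eq s (· ≤ ·), h, sort_eq], congrArg _⟩

variable [DecidableEq α]

def bagDist (m n : Multiset α) : ℕ := card (m - n) + card (n - m)

theorem bagDist_comm (m n : Multiset α) : bagDist m n = bagDist n m := add_comm _ _

theorem bagDist_self (m : Multiset α) : bagDist m m = 0 := by simp [bagDist]

theorem bagDist_add_left (s m n : Multiset α) : bagDist (s + m) (s + n) = bagDist m n := by
  simp only [bagDist, add_tsub_add_eq_tsub_left]

theorem bagDist_le_card_add_card (m n : Multiset α) : bagDist m n ≤ card m + card n :=
  add_le_add (card_le_card tsub_le_self) (card_le_card tsub_le_self)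

theorem bagDist_triangle (m n p : Multiset α) : bagDist m p ≤ bagDist m n + bagDist n p := by
  have h₁ := card_le_card (tsub_le_tsub_add_tsub : m - p ≤ m - n + (n - p))
  have h₂ := card_le_card (tsub_le_tsub_add_tsub : p - m ≤ p - n + (n - m))
  simp only [bagDist, card_add] at *
  omega

theorem bagDist_cons_left {a : α} {m n : Multiset α} (ha : a ∉ n) :
    bagDist (a ::ₘ m) n = bagDist m n + 1 := by
  have hsub : a ::ₘ m - n = a ::ₘ (m - n) := by
    ext b
    rw [count_sub, count_cons, count_cons, count_sub]
    split_ifs with hb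
    · have := count_eq_zero.2 (hb ▸ ha)
      omega
    · rfl
  rw [bagDist, bagDist, hsub, sub_cons, erase_of_notMem ha, card_cons]
  omega

theorem bagDist_cons_right {a : α} {m n : Multiset α} (ha : a ∉ m) :
    bagDist m (a ::ₘ n) = bagDist m n + 1 := by
  rw [bagDist_comm, bagDist_cons_left ha, bagDist_comm]

end Multiset

namespace LTree

open Multiset

theorem node_induction {P : LTree → Prop} (h : ∀ a cs, (∀ c ∈ cs, P c) → P (node a cs)) :
    ∀ t, P t
  | node a cs => h a cs fun c _ => node_induction h c
decreasing_by have := List.sizeOf_lt_of_mem ‹c ∈ cs›; simp only [LTree.node.sizeOf_spec]; omega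

theorem height_node (a : ℕ) (cs : List LTree) :
    height (node a cs) = ((cs : Multiset LTree).map (height · + 1)).sup := by
  rw [height, map_coe, sup_coe]
  exact congrArg (List.foldr max 0) (List.attach_map_val (l := cs) (f := fun c => height c + 1))

theorem subtrees_node (a : ℕ) (cs : List LTree) :
    subtrees (node a cs) = node a cs ::ₘ (cs : Multiset LTree).bind subtrees := by
  rw [subtrees, List.attach_map_val, Multiset.bind, map_coe, join, sum_coe]

theorem code_node (a : ℕ) (cs : List LTree) :
    code (node a cs) = Nat.pair a (Encodable.encode ((cs : Multiset LTree).map code).sort) := by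
  rw [code, List.attach_map_val, map_coe, coe_sort]

theorem height_lt_of_mem {c : LTree} {a : ℕ} {cs : List LTree} (hc : c ∈ cs) :
    height c < height (node a cs) := by
  rw [height_node]
  exact Nat.lt_succ_self _ |>.trans_le (le_sup (mem_map_of_mem _ (mem_coe.2 hc)))

theorem eq_or_height_lt_of_mem_subtrees {s : LTree} :
    ∀ {t : LTree}, s ∈ subtrees t → s = t ∨ height s < height t := by
  intro t
  induction t using node_induction with
  | h a cs ih =>
    rw [subtrees_node, mem_cons, mem_bind]
    rintro (rfl | ⟨c, hc, hs⟩)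
    · exact .inl rfl
    · have hc := mem_coe.1 hc
      refine .inr (lt_of_le_of_lt ?_ (height_lt_of_mem hc))
      rcases ih c hc hs with rfl | h
      exacts [le_rfl, h.le]

theorem height_le_of_mem_subtrees {s t : LTree} (hs : s ∈ subtrees t) : height s ≤ height t := by
  rcases eq_or_height_lt_of_mem_subtrees hs with rfl | h
  exacts [le_rfl, h.le]

theorem iso_node_iff {a b : ℕ} {cs ds : List LTree} :
    Iso (node a cs) (node b ds) ↔ a = b ∧ Rel Iso cs ds := by
  rw [rel_coe_left_iff]
  constructor
  · rintro ⟨hperm, hrel⟩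
    exact ⟨rfl, _, coe_eq_coe.2 hperm.symm, hrel⟩
  · rintro ⟨rfl, l, hl, hrel⟩
    exact .node (coe_eq_coe.1 hl).symm hrel

theorem code_eq_code_iff : ∀ t t' : LTree, code t = code t' ↔ Iso t t' := by
  intro t
  induction t using node_induction with
  | h a cs ih =>
    rintro ⟨b, ds⟩
    rw [code_node, code_node, Nat.pair_eq_pair, Encodable.encode_inj, iso_node_iff]
    refine and_congr_right fun _ => ?_
    rw [sort_inj, ← rel_eq, rel_map]
    exact ⟨fun h => h.mono fun x hx y _ hxy => (ih x (mem_coe.1 hx) y).1 hxy,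
      fun h => h.mono fun x hx y _ hxy => (ih x (mem_coe.1 hx) y).2 hxy⟩

theorem Iso.refl (t : LTree) : Iso t t := (code_eq_code_iff t t).1 rfl

theorem Iso.code_eq {t t' : LTree} (h : Iso t t') : code t = code t' := (code_eq_code_iff t t').2 h

theorem Iso.symm {t t' : LTree} (h : Iso t t') : Iso t' t :=
  (code_eq_code_iff t' t).1 h.code_eq.symm

theorem Iso.trans {t₁ t₂ t₃ : LTree} (h₁₂ : Iso t₁ t₂) (h₂₃ : Iso t₂ t₃) : Iso t₁ t₃ :=
  (code_eq_code_iff t₁ t₃).1 (h₁₂.code_eq.trans h₂₃.code_eq)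

theorem iso_of_perm {a : ℕ} {cs ds : List LTree} (h : cs.Perm ds) : Iso (node a cs) (node a ds) :=
  .node h.symm (List.forall₂_same.2 fun c _ => .refl c)

theorem Iso.height_eq : ∀ {t t' : LTree}, Iso t t' → height t = height t' := by
  intro t
  induction t using node_induction with
  | h a cs ih =>
    rintro ⟨b, ds⟩ h
    obtain ⟨rfl, hrel⟩ := iso_node_iff.1 h
    rw [height_node, height_node]
    congr 1
    rw [← rel_eq, rel_map]
    exact hrel.mono fun x hx y _ hxy => by rw [ih x (mem_coe.1 hx) hxy]

theorem Iso.rel_subtrees : ∀ {t t' : LTree}, Iso t t' → Rel Iso (subtrees t) (subtrees t') := by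
  intro t
  induction t using node_induction with
  | h a cs ih =>
    rintro ⟨b, ds⟩ h
    obtain ⟨rfl, hrel⟩ := iso_node_iff.1 h
    rw [subtrees_node, subtrees_node]
    refine .cons h (rel_bind (r := fun x y => x ∈ cs ∧ Iso x y)
      (fun x y hxy => ih x hxy.1 hxy.2) ?_)
    exact hrel.mono fun x hx y _ hxy => ⟨mem_coe.1 hx, hxy⟩

def truncBocs (h : ℕ) (t : LTree) : Multiset ℕ := ((subtrees t).filter (height · ≤ h)).map code

theorem truncBocs_of_height_le {h : ℕ} {t : LTree} (ht : height t ≤ h) :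
    truncBocs h t = bocs t := by
  rw [truncBocs, bocs, filter_eq_self.2 fun s hs => (height_le_of_mem_subtrees hs).trans ht]

theorem Iso.truncBocs_eq {t t' : LTree} (hiso : Iso t t') (h : ℕ) :
    truncBocs h t = truncBocs h t' :=
  hiso.rel_subtrees.map_filter_eq (fun _ _ hxy => by rw [hxy.height_eq]) fun _ _ hxy => hxy.code_eq

theorem Iso.bocs_eq {t t' : LTree} (hiso : Iso t t') : bocs t = bocs t' := by
  rw [← truncBocs_of_height_le (le_refl (height t)), hiso.truncBocs_eq,
    truncBocs_of_height_le hiso.height_eq.ge]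

theorem subtrees_node_middle (a : ℕ) (pre post : List LTree) (t : LTree) :
    subtrees (node a (pre ++ t :: post)) =
      node a (pre ++ t :: post) ::ₘ
        (subtrees t + (↑(pre ++ post) : Multiset LTree).bind subtrees) := by
  rw [subtrees_node, coe_append_cons, cons_bind]

theorem subtrees_node_eq_add (a : ℕ) (cs : List LTree) :
    subtrees (node a cs) = (cs : Multiset LTree).bind subtrees + {node a cs} := by
  rw [subtrees_node, add_comm, singleton_add]

theorem subtrees_delete (a b : ℕ) (pre post ds : List LTree) :
    subtrees (node a (pre ++ node b ds :: post)) =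
      (↑(pre ++ ds ++ post) : Multiset LTree).bind subtrees +
        (node a (pre ++ node b ds :: post) ::ₘ {node b ds}) := by
  rw [subtrees_node_middle, subtrees_node_eq_add b ds, add_cons]
  simp only [← coe_add, add_bind]
  abel_nf

theorem nodup_map_height_cons {a : ℕ} {pre post : List LTree} {t : LTree} {C P : Multiset LTree}
    (ht : subtrees t = C + P) (hP : (P.map height).Nodup) :
    ((node a (pre ++ t :: post) ::ₘ P).map height).Nodup := by
  rw [map_cons, nodup_cons]
  refine ⟨fun hmem => ?_, hP⟩
  obtain ⟨x, hx, hxh⟩ := mem_map.1 hmem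
  have hxt := height_le_of_mem_subtrees (ht ▸ mem_add.2 (.inr hx) : x ∈ subtrees t)
  have := height_lt_of_mem (a := a)
    (List.mem_append_right pre (List.mem_cons_self (a := t) (l := post)))
  omega

theorem EditStep.exists_subtrees_eq_add {s s' : LTree} (hstep : EditStep s s') :
    ∃ C P P' : Multiset LTree, subtrees s = C + P ∧ subtrees s' = C + P' ∧
      (P.map height).Nodup ∧ (P'.map height).Nodup := by
  have nodup_singleton_height (t : LTree) : (({t} : Multiset LTree).map height).Nodup := by simp
  induction hstep with
  | relabel a b cs =>
    exact ⟨_, _, _, subtrees_node_eq_add a cs, subtrees_node_eq_add b cs,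
      nodup_singleton_height _, nodup_singleton_height _⟩
  | delete a b pre post ds =>
    exact ⟨_, _, _, subtrees_delete a b pre post ds, subtrees_node_eq_add a (pre ++ ds ++ post),
      nodup_map_height_cons (subtrees_node_eq_add b ds) (nodup_singleton_height _),
      nodup_singleton_height _⟩
  | insert a b pre post ds =>
    exact ⟨_, _, _, subtrees_node_eq_add a (pre ++ ds ++ post), subtrees_delete a b pre post ds,
      nodup_singleton_height _,
      nodup_map_height_cons (subtrees_node_eq_add b ds) (nodup_singleton_height _)⟩
  | congr a pre post t t' _ ih =>
    obtain ⟨C, P, P', ht, ht', hP, hP'⟩ := ih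
    refine ⟨(↑(pre ++ post) : Multiset LTree).bind subtrees + C, _, _, ?_, ?_,
      nodup_map_height_cons (a := a) (pre := pre) (post := post) ht hP,
      nodup_map_height_cons (a := a) (pre := pre) (post := post) ht' hP'⟩
    · rw [subtrees_node_middle, ht, add_cons]
      abel_nf
    · rw [subtrees_node_middle, ht', add_cons]
      abel_nf

theorem card_filter_height_le {P : Multiset LTree} (hP : (P.map height).Nodup) (h : ℕ) :
    card (P.filter (height · ≤ h)) ≤ h + 1 := by
  classical
  have hnd : ((P.filter (height · ≤ h)).map height).Nodup :=
    nodup_of_le (map_le_map (filter_le _ _)) hP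
  rw [← card_map height, ← toFinset_card_of_nodup hnd, ← Finset.card_range (h + 1)]
  refine Finset.card_le_card fun x hx => ?_
  obtain ⟨y, hy, rfl⟩ := mem_map.1 (mem_toFinset.1 hx)
  exact Finset.mem_range.2 (Nat.lt_succ_of_le (mem_filter.1 hy).2)

theorem EditStep.bagDist_truncBocs_le {s s' : LTree} (hstep : EditStep s s') (h : ℕ) :
    bagDist (truncBocs h s) (truncBocs h s') ≤ 2 * h + 2 := by
  obtain ⟨C, P, P', hs, hs', hP, hP'⟩ := hstep.exists_subtrees_eq_add
  rw [truncBocs, truncBocs, hs, hs', filter_add, filter_add, map_add, map_add, bagDist_add_left]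
  have := bagDist_le_card_add_card ((P.filter (height · ≤ h)).map code)
    ((P'.filter (height · ≤ h)).map code)
  rw [card_map, card_map] at this
  have := card_filter_height_le hP h
  have := card_filter_height_le hP' h
  omega

theorem Edits.bagDist_truncBocs_le {n : ℕ} {t t' : LTree} (hed : Edits n t t') (h : ℕ) :
    bagDist (truncBocs h t) (truncBocs h t') ≤ (2 * h + 2) * n := by
  induction hed with
  | iso hiso => rw [hiso.truncBocs_eq, bagDist_self]; exact Nat.zero_le _
  | @step n t s s' t' hiso hstep _ ih =>
    calc bagDist (truncBocs h t) (truncBocs h t')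
        ≤ bagDist (truncBocs h s) (truncBocs h s') + bagDist (truncBocs h s') (truncBocs h t') := by
          rw [hiso.truncBocs_eq]; exact bagDist_triangle _ _ _
      _ ≤ (2 * h + 2) + (2 * h + 2) * n := add_le_add (hstep.bagDist_truncBocs_le h) ih
      _ = (2 * h + 2) * (n + 1) := by ring

theorem dphi_eq_bagDist (T T' : LTree) : dphi T T' = bagDist (bocs T) (bocs T') := by
  rw [dphi, Finset.sum_add_distrib, bagDist]
  congr 1 <;>
  · rw [← sum_count_eq_card (s := (bocs T + bocs T').toFinset)]
    · exact Finset.sum_congr rfl fun c _ => (count_sub _ _ _).symm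
    · intro c hc
      exact mem_toFinset.2 (by simp [mem_of_le tsub_le_self hc])

theorem dphi_le_mul_of_edits {h n : ℕ} {T T' : LTree} (hT : height T ≤ h) (hT' : height T' ≤ h)
    (hed : Edits n T T') : dphi T T' ≤ (2 * h + 2) * n := by
  simpa only [dphi_eq_bagDist, truncBocs_of_height_le hT, truncBocs_of_height_le hT'] using
    hed.bagDist_truncBocs_le h

theorem Edits.iso_left {n : ℕ} {t₀ t t' : LTree} (hiso : Iso t₀ t) (h : Edits n t t') :
    Edits n t₀ t' := by
  cases h with
  | iso h => exact .iso (hiso.trans h)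
  | step h₁ h₂ h₃ => exact .step (hiso.trans h₁) h₂ h₃

theorem Edits.iso_right {n : ℕ} {t t' t₁ : LTree} (h : Edits n t t') (hiso : Iso t' t₁) :
    Edits n t t₁ := by
  induction h with
  | iso h => exact .iso (h.trans hiso)
  | step h₁ h₂ _ ih => exact .step h₁ h₂ (ih hiso)

theorem Edits.snoc {n : ℕ} {t₁ t₂ t₃ : LTree} (h : Edits n t₁ t₂) (hstep : EditStep t₂ t₃) :
    Edits (n + 1) t₁ t₃ := by
  induction h with
  | iso h => exact .step h hstep (.iso (.refl _))
  | step h₁ h₂ _ ih => exact .step h₁ h₂ (ih hstep)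

def consChild : LTree → LTree → LTree
  | node a cs, c => node a (c :: cs)

theorem EditStep.consChild {s s' : LTree} (c : LTree) (h : EditStep s s') :
    EditStep (s.consChild c) (s'.consChild c) := by
  cases h with
  | relabel a b cs => exact .relabel a b (c :: cs)
  | delete a b pre post ds => exact .delete a b (c :: pre) post ds
  | insert a b pre post ds => exact .insert a b (c :: pre) post ds
  | congr a pre post t t' h => exact .congr a (c :: pre) post t t' h

theorem Iso.consChild {s s' c d : LTree} (h : Iso s s') (hcd : Iso c d) :
    Iso (s.consChild c) (s'.consChild d) := by
  obtain ⟨a, cs⟩ := s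
  obtain ⟨b, ds⟩ := s'
  obtain ⟨rfl, hrel⟩ := iso_node_iff.1 h
  exact iso_node_iff.2 ⟨rfl, hrel.cons hcd⟩

theorem Edits.consChild {n : ℕ} {s s' c d : LTree} (h : Edits n s s') (hcd : Iso c d) :
    Edits n (s.consChild c) (s'.consChild d) := by
  induction h with
  | iso h => exact .iso (h.consChild hcd)
  | step h₁ h₂ _ ih => exact .step (h₁.consChild (.refl c)) (h₂.consChild c) ih

def forestBocs (F : Multiset LTree) : Multiset ℕ := F.bind bocs

theorem bocs_node (a : ℕ) (cs : List LTree) :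
    bocs (node a cs) = code (node a cs) ::ₘ forestBocs cs := by
  rw [bocs, subtrees_node, map_cons, map_bind, forestBocs]
  rfl

theorem forestBocs_middle (pre post : List LTree) (t : LTree) :
    forestBocs ↑(pre ++ t :: post) = bocs t + forestBocs ↑(pre ++ post) := by
  rw [forestBocs, coe_append_cons, cons_bind, forestBocs]

theorem forestBocs_delete (b : ℕ) (pre post ds : List LTree) :
    forestBocs ↑(pre ++ node b ds :: post) =
      code (node b ds) ::ₘ forestBocs ↑(pre ++ ds ++ post) := by
  rw [forestBocs_middle, bocs_node, cons_add]
  simp only [forestBocs, ← coe_add, add_bind]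
  abel_nf

theorem card_forestBocs_delete_lt (b : ℕ) (pre post ds : List LTree) :
    card (forestBocs ↑(pre ++ ds ++ post)) < card (forestBocs ↑(pre ++ node b ds :: post)) := by
  rw [forestBocs_delete, card_cons]
  exact Nat.lt_succ_self _

theorem card_forestBocs_middle_lt (pre post : List LTree) (t : LTree) :
    card (forestBocs ↑(pre ++ post)) < card (forestBocs ↑(pre ++ t :: post)) := by
  obtain ⟨a, cs⟩ := t
  rw [forestBocs_middle, card_add, bocs_node, card_cons]
  omega

theorem exists_iso_of_code_mem_forestBocs {x : LTree} {F : Multiset LTree}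
    (hx : code x ∈ forestBocs F) : ∃ g ∈ F, ∃ s ∈ subtrees g, Iso s x := by
  obtain ⟨g, hg, hmem⟩ := mem_bind.1 hx
  obtain ⟨s, hs, hcode⟩ := mem_map.1 hmem
  exact ⟨g, hg, s, hs, (code_eq_code_iff s x).1 hcode⟩

theorem code_notMem_forestBocs {t : LTree} {b : ℕ} {ds : List LTree}
    (hh : height (node b ds) ≤ height t) : code t ∉ forestBocs ds := by
  intro hmem
  obtain ⟨d, hd, s, hs, hiso⟩ := exists_iso_of_code_mem_forestBocs hmem
  have := height_le_of_mem_subtrees hs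
  have := height_lt_of_mem (a := b) (mem_coe.1 hd)
  have := hiso.height_eq
  omega

theorem exists_iso_of_code_mem_of_height_le {x : LTree} {F : Multiset LTree}
    (hx : code x ∈ forestBocs F) (hmax : ∀ g ∈ F, height g ≤ height x) : ∃ g ∈ F, Iso x g := by
  obtain ⟨g, hg, s, hs, hiso⟩ := exists_iso_of_code_mem_forestBocs hx
  rcases eq_or_height_lt_of_mem_subtrees hs with rfl | hlt
  · exact ⟨s, hg, hiso.symm⟩
  · have := hmax g hg
    have := hiso.height_eq
    omega

theorem exists_iso_of_forall_code_mem {L M : Multiset LTree}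
    (hLM : ∀ t ∈ L, code t ∈ forestBocs M) (hML : ∀ g ∈ M, code g ∈ forestBocs L)
    (hne : L + M ≠ 0) :
    ∃ t ∈ L, ∃ g ∈ M, Iso t g := by
  obtain ⟨x, hx, hmax⟩ := exists_max_image height hne
  rcases mem_add.1 hx with hxL | hxM
  · obtain ⟨g, hg, hiso⟩ :=
      exists_iso_of_code_mem_of_height_le (hLM x hxL) fun g hg => hmax g (mem_add.2 (.inr hg))
    exact ⟨x, hxL, g, hg, hiso⟩
  · obtain ⟨t, ht, hiso⟩ :=
      exists_iso_of_code_mem_of_height_le (hML x hxM) fun t ht => hmax t (mem_add.2 (.inl ht))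
    exact ⟨t, ht, x, hxM, hiso.symm⟩

theorem edits_bagDist_forestBocs (a : ℕ) (L M : List LTree) :
    Edits (bagDist (forestBocs L) (forestBocs M)) (node a L) (node a M) := by
  by_cases hL : ∃ t ∈ L, code t ∉ forestBocs M
  · obtain ⟨⟨b, ds⟩, ht, hcode⟩ := hL
    obtain ⟨pre, post, rfl⟩ := List.append_of_mem ht
    rw [forestBocs_delete, bagDist_cons_left hcode]
    exact .step (.refl _) (.delete a b pre post ds)
      (edits_bagDist_forestBocs a (pre ++ ds ++ post) M)
  by_cases hM : ∃ g ∈ M, code g ∉ forestBocs L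
  · obtain ⟨⟨b, ds⟩, hg, hcode⟩ := hM
    obtain ⟨pre, post, rfl⟩ := List.append_of_mem hg
    rw [forestBocs_delete, bagDist_cons_right hcode]
    exact (edits_bagDist_forestBocs a L (pre ++ ds ++ post)).snoc (.insert a b pre post ds)
  push Not at hL hM
  by_cases hnil : (L : Multiset LTree) + M = 0
  · obtain ⟨rfl, rfl⟩ : L = [] ∧ M = [] := by simpa using hnil
    rw [bagDist_self]
    exact .iso (.refl _)
  obtain ⟨t, ht, g, hg, hiso⟩ := exists_iso_of_forall_code_mem (L := L) (M := M)
    (fun t ht => hL t (mem_coe.1 ht)) (fun g hg => hM g (mem_coe.1 hg)) hnil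
  obtain ⟨pre, post, rfl⟩ := List.append_of_mem (mem_coe.1 ht)
  obtain ⟨pre', post', rfl⟩ := List.append_of_mem (mem_coe.1 hg)
  rw [forestBocs_middle, forestBocs_middle, hiso.bocs_eq, bagDist_add_left]
  exact (((edits_bagDist_forestBocs a (pre ++ post) (pre' ++ post')).consChild hiso).iso_left
    (iso_of_perm List.perm_middle)).iso_right (iso_of_perm List.perm_middle.symm)
termination_by card (forestBocs L) + card (forestBocs M)
decreasing_by
  all_goals subst_vars
  · exact Nat.add_lt_add_right (card_forestBocs_delete_lt ..) _
  · exact Nat.add_lt_add_left (card_forestBocs_delete_lt ..) _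
  · exact Nat.add_lt_add (card_forestBocs_middle_lt ..) (card_forestBocs_middle_lt ..)

theorem exists_edits_le_dphi {T T' : LTree} (hh : height T = height T') :
    ∃ n ≤ dphi T T', Edits n T T' := by
  by_cases hiso : Iso T T'
  · exact ⟨0, Nat.zero_le _, .iso hiso⟩
  obtain ⟨a, cs⟩ := T
  obtain ⟨b, ds⟩ := T'
  have hcode : code (node a cs) ≠ code (node b ds) := fun h => hiso ((code_eq_code_iff _ _).1 h)
  refine ⟨bagDist (forestBocs cs) (forestBocs ds) + 1, ?_,
    .step (.refl _) (.relabel a b cs) (edits_bagDist_forestBocs b cs ds)⟩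
  rw [dphi_eq_bagDist, bocs_node, bocs_node,
    bagDist_cons_left (mt mem_cons.1 (not_or.2 ⟨hcode, code_notMem_forestBocs hh.ge⟩)),
    bagDist_cons_right (code_notMem_forestBocs hh.le)]
  omega

end LTree

open LTree in
theorem dphi_le_ted_le_dphi (h : ℕ) (T1 T2 : LTree)
    (h1 : T1.height = h) (h2 : T2.height = h) :
    (dphi T1 T2 : ℝ) / (2 * h + 2) ≤ (dTED T1 T2 : ℝ) ∧
      (dTED T1 T2 : ℝ) ≤ (dphi T1 T2 : ℝ) := by
  obtain ⟨n, hn, hedits⟩ := exists_edits_le_dphi (h1.trans h2.symm)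
  have hted : Edits (dTED T1 T2) T1 T2 := Nat.sInf_mem (s := {n | Edits n T1 T2}) ⟨n, hedits⟩
  have lower : dphi T1 T2 ≤ (2 * h + 2) * dTED T1 T2 := dphi_le_mul_of_edits h1.le h2.le hted
  have upper : dTED T1 T2 ≤ dphi T1 T2 := (Nat.sInf_le hedits).trans hn
  constructor
  · rw [div_le_iff₀ (by positivity)]
    have : (dphi T1 T2 : ℝ) ≤ (2 * h + 2) * dTED T1 T2 := by exact_mod_cast lower
    linarith
  · exact_mod_cast upper
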